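/- Let G be a group acting on a type X (a multiplicative action of G on X), and let s : G → X → ℝ be a scoring function that is G-equivariant in the sense that s(g)(h • x) = s(h⁻¹ * g)(x) for all g, h ∈ G and x ∈ X. For each x ∈ X define the minimizing set M(x) := {g ∈ G | ∀ g' ∈ G, s(g)(x) ≤ s(g')(x)}. Then for all h ∈ G and x ∈ X, the minimizing set transforms equivariantly: M(h • x) = {h * g | g ∈ M(x)} (the image of M(x) under left multiplication by h). -/
import Mathlib


theorem stmt_12 {G X : Type*} [Group G] [MulAction G X]
    (s : G → X → ℝ)
    (hs : ∀ (g h : G) (x : X), s g (h • x) = s (h⁻¹ * g) x)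
    (h : G) (x : X) :
    {g : G | ∀ g' : G, s g (h • x) ≤ s g' (h • x)} =
      (fun g : G => h * g) '' {g : G | ∀ g' : G, s g x ≤ s g' x} := by
  ext g
  simp only [Set.mem_setOf_eq, Set.mem_image]
  constructor
  · intro hg
    refine ⟨h⁻¹ * g, fun g' => ?_, by group⟩
    have := hg (h * g')
    rw [hs g h x, hs (h * g') h x] at this
    simpa using this
  · rintro ⟨a, ha, rfl⟩
    intro g'
    rw [hs (h * a) h x, hs g' h x]
    simpa using ha (h⁻¹ * g')
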